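/- arXiv:1507.00243 — 3 statements merged into one kernel-verified Lean document; each statement's English description precedes it below -/
import Mathlib

section
/- Let 1 ≤ k ≤ n and let u ∈ U(k) be a k×k unitary matrix. Then there exists a (k-1)×(k-1) unitary matrix v ∈ U(k-1) such that the normalized trace distance in M_n(ℂ) between v ⊕ 1_{n-k+1} and u ⊕ 1_{n-k} is at most 4/n. -/
open Matrix
open scoped ComplexOrder

/-- The absolute value `|x| = (x*x)^{1/2}` of a complex matrix. -/
noncomputable def mAbs {n : ℕ} (x : Matrix (Fin n) (Fin n) ℂ) : Matrix (Fin n) (Fin n) ℂ :=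
  ((Matrix.posSemidef_conjTranspose_mul_self x).1.eigenvectorUnitary : Matrix (Fin n) (Fin n) ℂ) *
    diagonal ((↑) ∘ (√·) ∘ (Matrix.posSemidef_conjTranspose_mul_self x).1.eigenvalues) *
    (star (Matrix.posSemidef_conjTranspose_mul_self x).1.eigenvectorUnitary : Matrix (Fin n) (Fin n) ℂ)

/-- The normalized trace norm `‖x‖₁ = (1/n)·tr(|x|)`. -/
noncomputable def trNorm {n : ℕ} (x : Matrix (Fin n) (Fin n) ℂ) : ℝ :=
  (1 / (n : ℝ)) * (mAbs x).trace.re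

/-- The operator norm of a matrix acting on `ℂⁿ`. -/
noncomputable def opNorm {n : ℕ} (x : Matrix (Fin n) (Fin n) ℂ) : ℝ :=
  ‖Matrix.toEuclideanCLM (𝕜 := ℂ) x‖

/-- The block-diagonal padding `u ⊕ 1_{n-k}` of a `k×k` matrix to an `n×n` matrix. -/
def pad {k n : ℕ} (_h : k ≤ n) (u : Matrix (Fin k) (Fin k) ℂ) : Matrix (Fin n) (Fin n) ℂ :=
  fun i j =>
    if hi : (i : ℕ) < k then (if hj : (j : ℕ) < k then u ⟨i, hi⟩ ⟨j, hj⟩ else 0)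
    else (if (i : ℕ) = (j : ℕ) then 1 else 0)

/-!
Let `x = u e` be the last column of `u`, `c = ⟨e, x⟩` and `g = x - c e ⊥ e`. The unitary `r`
acting on `span {e, g}` as the rotation `[[c̄, ‖g‖], [-‖g‖, c]]` (in the basis `e, g / ‖g‖`) and
trivially on its orthogonal complement sends `x` to `e`, and `(r - 1)ᴴ (r - 1) = (2 - 2 Re c) P`
with `P` the projection onto `span {e, g}`; hence `tr |r - 1| = √(2 - 2 Re c) tr P ≤ 2 · 2`.
The unitary `w = r u` fixes `e`, so `w = v ⊕ 1`, and `tr |w - u| = tr |(r - 1) u| = tr |r - 1|`.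
Padding by the identity does not change `tr |·|` of a difference, which turns this into the
bound `4 / n` for the normalized trace norm.
-/

open scoped MatrixOrder

section CFCAbs
variable {m n : Type*} [Fintype m] [Fintype n] [DecidableEq m] [DecidableEq n]

lemma Matrix.cfcAbs_eq_of_mul_self {x B : Matrix n n ℂ} (hB : B.PosSemidef)
    (h : B * B = xᴴ * x) : CFC.abs x = B :=
  CFC.sqrt_unique h hB.nonneg

lemma Matrix.cfcAbs_conjTranspose_mul_mul {V : Matrix m n ℂ} (hV : V * Vᴴ = 1)
    (x : Matrix m m ℂ) : CFC.abs (Vᴴ * x * V) = Vᴴ * CFC.abs x * V := by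
  have habs : (CFC.abs x).PosSemidef := nonneg_iff_posSemidef.mp (CFC.abs_nonneg x)
  refine cfcAbs_eq_of_mul_self (habs.conjTranspose_mul_mul_same V) ?_
  calc Vᴴ * CFC.abs x * V * (Vᴴ * CFC.abs x * V) = Vᴴ * (CFC.abs x * CFC.abs x) * V := by
        simp only [Matrix.mul_assoc, ← Matrix.mul_assoc V, hV, Matrix.one_mul]
    _ = (Vᴴ * x * V)ᴴ * (Vᴴ * x * V) := by
        rw [CFC.abs_mul_abs]
        simp only [conjTranspose_mul, conjTranspose_conjTranspose, star_eq_conjTranspose,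
          Matrix.mul_assoc, ← Matrix.mul_assoc V, hV, Matrix.one_mul]

lemma Matrix.trace_cfcAbs_mul_unitary (x : Matrix n n ℂ) {u : Matrix n n ℂ}
    (hu : u ∈ unitaryGroup n ℂ) : (CFC.abs (x * u)).trace = (CFC.abs x).trace := by
  have hu₁ : uᴴ * u = 1 := mem_unitaryGroup_iff'.mp hu
  have hu₂ : u * uᴴ = 1 := mem_unitaryGroup_iff.mp hu
  have habs : CFC.abs (u * x) = CFC.abs x := by
    rw [CFC.abs, CFC.abs, star_mul, Matrix.mul_assoc, ← Matrix.mul_assoc (star u),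
      star_eq_conjTranspose u, hu₁, Matrix.one_mul]
  have hxu : x * u = uᴴ * (u * x) * u := by rw [← Matrix.mul_assoc, hu₁, Matrix.one_mul]
  rw [hxu, cfcAbs_conjTranspose_mul_mul hu₂, habs, trace_mul_cycle, hu₂, Matrix.one_mul]

end CFCAbs

lemma mAbs_eq_cfcAbs {n : ℕ} (x : Matrix (Fin n) (Fin n) ℂ) : mAbs x = CFC.abs x := by
  have hX := Matrix.posSemidef_conjTranspose_mul_self x
  rw [CFC.abs, star_eq_conjTranspose, CFC.sqrt_eq_real_sqrt _ hX.nonneg, cfcₙ_eq_cfc, hX.1.cfc_eq]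
  rfl

section Pad
variable {k l n : ℕ}

def castLEMatrix (h : k ≤ n) : Matrix (Fin k) (Fin n) ℂ :=
  (1 : Matrix (Fin n) (Fin n) ℂ).submatrix (Fin.castLE h) id

lemma castLEMatrix_mul_conjTranspose (h : k ≤ n) :
    castLEMatrix h * (castLEMatrix h)ᴴ = 1 := by
  rw [castLEMatrix, conjTranspose_submatrix, conjTranspose_one,
    ← submatrix_mul _ _ _ _ _ Function.bijective_id, Matrix.one_mul,
    submatrix_one _ (Fin.castLE_injective h)]

lemma castLEMatrix_mul {p : Type*} (h : k ≤ n) (M : Matrix (Fin n) p ℂ) :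
    castLEMatrix h * M = M.submatrix (Fin.castLE h) id := by
  ext i j
  simp [castLEMatrix, mul_apply, one_apply]

lemma castLEMatrix_mul_castLEMatrix (h₁ : k ≤ l) (h₂ : l ≤ n) :
    castLEMatrix h₁ * castLEMatrix h₂ = castLEMatrix (h₁.trans h₂) := by
  rw [castLEMatrix_mul, castLEMatrix, castLEMatrix, submatrix_submatrix]
  rfl

lemma pad_eq (h : k ≤ n) (x : Matrix (Fin k) (Fin k) ℂ) :
    pad h x =
      (castLEMatrix h)ᴴ * x * castLEMatrix h + (1 - (castLEMatrix h)ᴴ * castLEMatrix h) := by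
  ext i j
  have hrange : ∀ i : Fin n, k ≤ i → ∀ a : Fin k, Fin.castLE h a ≠ i :=
    fun i hi a ha => absurd a.isLt (ha ▸ hi).not_gt
  rcases lt_or_ge (i : ℕ) k with hi | hi
  · obtain ⟨a, rfl⟩ : ∃ a : Fin k, Fin.castLE h a = i := ⟨⟨i, hi⟩, rfl⟩
    rcases lt_or_ge (j : ℕ) k with hj | hj
    · obtain ⟨b, rfl⟩ : ∃ b : Fin k, Fin.castLE h b = j := ⟨⟨j, hj⟩, rfl⟩
      simp [pad, castLEMatrix, mul_apply, one_apply]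
    · simp [pad, castLEMatrix, mul_apply, one_apply, hj.not_gt, hrange j hj]
  · simp [pad, castLEMatrix, mul_apply, one_apply, hi.not_gt, Fin.val_inj,
      (hrange i hi · |>.symm)]

lemma pad_sub (h : k ≤ n) (x y : Matrix (Fin k) (Fin k) ℂ) :
    pad h x - pad h y = (castLEMatrix h)ᴴ * (x - y) * castLEMatrix h := by
  rw [pad_eq, pad_eq, Matrix.mul_sub, Matrix.sub_mul]
  abel

lemma pad_mul (h : k ≤ n) (x y : Matrix (Fin k) (Fin k) ℂ) :
    pad h (x * y) = pad h x * pad h y := by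
  have hJ := castLEMatrix_mul_conjTranspose h
  simp only [pad_eq, Matrix.mul_add, Matrix.add_mul, Matrix.mul_sub, Matrix.sub_mul,
    Matrix.mul_one, Matrix.one_mul, Matrix.mul_assoc]
  simp only [← Matrix.mul_assoc (castLEMatrix h) (castLEMatrix h)ᴴ, hJ, Matrix.one_mul]
  abel

lemma conjTranspose_pad (h : k ≤ n) (x : Matrix (Fin k) (Fin k) ℂ) :
    (pad h x)ᴴ = pad h xᴴ := by
  simp only [pad_eq, conjTranspose_add, conjTranspose_sub, conjTranspose_mul,
    conjTranspose_conjTranspose, conjTranspose_one, Matrix.mul_assoc]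

lemma castLEMatrix_mul_pad_mul (h : k ≤ n) (x : Matrix (Fin k) (Fin k) ℂ) :
    castLEMatrix h * pad h x * (castLEMatrix h)ᴴ = x := by
  have hJ := castLEMatrix_mul_conjTranspose h
  simp only [pad_eq, Matrix.mul_add, Matrix.add_mul, Matrix.mul_sub, Matrix.sub_mul,
    Matrix.mul_one, Matrix.mul_assoc]
  simp only [← Matrix.mul_assoc (castLEMatrix h) (castLEMatrix h)ᴴ, hJ, Matrix.one_mul,
    Matrix.mul_one]
  abel

lemma mem_unitaryGroup_of_pad_mem (h : k ≤ n) {v : Matrix (Fin k) (Fin k) ℂ}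
    (hv : pad h v ∈ unitaryGroup (Fin n) ℂ) : v ∈ unitaryGroup (Fin k) ℂ := by
  rw [mem_unitaryGroup_iff', star_eq_conjTranspose] at hv ⊢
  rw [← castLEMatrix_mul_pad_mul h (vᴴ * v), pad_mul, ← conjTranspose_pad, hv, Matrix.mul_one,
    castLEMatrix_mul_conjTranspose]

lemma pad_pad (h₁ : k ≤ l) (h₂ : l ≤ n) (x : Matrix (Fin k) (Fin k) ℂ) :
    pad h₂ (pad h₁ x) = pad (h₁.trans h₂) x := by
  simp only [pad_eq, ← castLEMatrix_mul_castLEMatrix h₁ h₂, conjTranspose_mul, Matrix.mul_add,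
    Matrix.add_mul, Matrix.mul_sub, Matrix.sub_mul, Matrix.mul_one, Matrix.mul_assoc]
  abel

lemma pad_submatrix_castSucc {m : ℕ} {w : Matrix (Fin (m + 1)) (Fin (m + 1)) ℂ}
    (hcol : w *ᵥ Pi.single (Fin.last m) 1 = Pi.single (Fin.last m) 1)
    (hrow : wᴴ *ᵥ Pi.single (Fin.last m) 1 = Pi.single (Fin.last m) 1) :
    pad (Nat.le_succ m) (w.submatrix Fin.castSucc Fin.castSucc) = w := by
  rw [mulVec_single_one] at hcol hrow
  have hcol' (i) : w i (Fin.last m) = (Pi.single (Fin.last m) 1 : Fin (m + 1) → ℂ) i :=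
    congrFun hcol i
  have hrow' (j) : w (Fin.last m) j = (Pi.single (Fin.last m) 1 : Fin (m + 1) → ℂ) j := by
    simpa [Pi.single_apply, apply_ite] using congrArg star (congrFun hrow j)
  ext i j
  induction i using Fin.lastCases <;> induction j using Fin.lastCases <;>
    simp [pad, hcol', hrow', Fin.castSucc_ne_last, (Fin.is_lt _).ne']

lemma exists_pad_eq_of_mulVec_single {m : ℕ} {w : Matrix (Fin (m + 1)) (Fin (m + 1)) ℂ}
    (hw : w ∈ unitaryGroup (Fin (m + 1)) ℂ)
    (hcol : w *ᵥ Pi.single (Fin.last m) 1 = Pi.single (Fin.last m) 1) :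
    ∃ v ∈ unitaryGroup (Fin m) ℂ, pad (Nat.le_succ m) v = w := by
  have hrow : wᴴ *ᵥ Pi.single (Fin.last m) 1 = Pi.single (Fin.last m) 1 := by
    rw [← hcol, mulVec_mulVec, ← star_eq_conjTranspose, mem_unitaryGroup_iff'.mp hw, one_mulVec,
      hcol]
  have hpad := pad_submatrix_castSucc hcol hrow
  exact ⟨_, mem_unitaryGroup_of_pad_mem _ (hpad ▸ hw), hpad⟩

lemma trNorm_pad_sub {k n : ℕ} (h : k ≤ n) (x y : Matrix (Fin k) (Fin k) ℂ) :
    trNorm (pad h x - pad h y) = (CFC.abs (x - y)).trace.re / n := by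
  rw [trNorm, mAbs_eq_cfcAbs, pad_sub,
    cfcAbs_conjTranspose_mul_mul (castLEMatrix_mul_conjTranspose h), trace_mul_cycle,
    castLEMatrix_mul_conjTranspose, Matrix.one_mul, one_div_mul_eq_div]

end Pad

section PlaneRotation
variable {ι : Type*} [Fintype ι] {e g : ι → ℂ} {c : ℂ}

noncomputable def spanProj (e g : ι → ℂ) : Matrix ι ι ℂ :=
  vecMulVec e (star e) + (star g ⬝ᵥ g)⁻¹ • vecMulVec g (star g)

lemma spanProj_mul_self (he : star e ⬝ᵥ e = 1) (heg : star e ⬝ᵥ g = 0) :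
    spanProj e g * spanProj e g = spanProj e g := by
  have hge : star g ⬝ᵥ e = 0 := by rw [star_dotProduct, heg, star_zero]
  simp only [spanProj, Matrix.mul_add, Matrix.add_mul, Matrix.mul_smul, Matrix.smul_mul,
    vecMulVec_mul_vecMulVec, vecMulVec_smul, he, heg, hge, smul_smul, one_smul, zero_smul,
    smul_zero, vecMulVec_zero, add_zero, zero_add]
  match_scalars
  · rfl
  · rcases eq_or_ne (star g ⬝ᵥ g) 0 with hN | hN <;> simp [hN]

lemma conjTranspose_spanProj : (spanProj e g)ᴴ = spanProj e g := by
  simp only [spanProj, conjTranspose_add, conjTranspose_smul, conjTranspose_vecMulVec, star_star,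
    star_inv₀, ← star_dotProduct]

lemma posSemidef_spanProj (he : star e ⬝ᵥ e = 1) (heg : star e ⬝ᵥ g = 0) :
    (spanProj e g).PosSemidef := by
  rw [← spanProj_mul_self he heg]
  nth_rewrite 1 [← conjTranspose_spanProj]
  exact posSemidef_conjTranspose_mul_self _

lemma re_trace_spanProj_le (he : star e ⬝ᵥ e = 1) : (spanProj e g).trace.re ≤ 2 := by
  rw [spanProj, trace_add, trace_smul, trace_vecMulVec, trace_vecMulVec, dotProduct_comm e, he,
    dotProduct_comm g, smul_eq_mul]
  rcases eq_or_ne (star g ⬝ᵥ g) 0 with hN | hN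
  · simp [hN]
  · simp [inv_mul_cancel₀ hN]
    norm_num

lemma norm_le_one_of_star_mul_self_add (hc : star c * c + star g ⬝ᵥ g = 1) : ‖c‖ ≤ 1 := by
  have hsq : ((‖c‖ ^ 2 : ℝ) : ℂ) ≤ (1 : ℝ) := by
    rw [Complex.ofReal_one, ← Complex.normSq_eq_norm_sq, Complex.normSq_eq_conj_mul_self,
      ← Complex.star_def, ← hc]
    exact le_add_of_nonneg_right (dotProduct_star_self_nonneg g)
  exact (sq_le_one_iff₀ (norm_nonneg c)).mp (Complex.real_le_real.mp hsq)

variable [DecidableEq ι]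

/-- For `g = 0` the coefficient `(c - 1) / ‖g‖²` is `0` by the convention `x / 0 = 0`, and the
matrix is the phase `1 + (c̄ - 1) e eᴴ`. -/
noncomputable def planeRotation (e g : ι → ℂ) (c : ℂ) : Matrix ι ι ℂ :=
  1 + (star c - 1) • vecMulVec e (star e) + vecMulVec e (star g) - vecMulVec g (star e)
    + ((c - 1) / (star g ⬝ᵥ g)) • vecMulVec g (star g)

lemma planeRotation_mulVec (he : star e ⬝ᵥ e = 1) (heg : star e ⬝ᵥ g = 0)
    (hc : star c * c + star g ⬝ᵥ g = 1) :
    planeRotation e g c *ᵥ (c • e + g) = e := by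
  rcases eq_or_ne g 0 with rfl | hg
  · simp only [star_zero, dotProduct_zero, add_zero] at hc
    simp only [planeRotation, star_zero, vecMulVec_zero, zero_vecMulVec, smul_zero, add_zero,
      sub_zero, add_mulVec, smul_mulVec, one_mulVec, vecMulVec_mulVec, op_smul_eq_smul, mulVec_smul,
      he, smul_smul]
    match_scalars
    linear_combination hc
  · have hN : star g ⬝ᵥ g ≠ 0 := mt dotProduct_star_self_eq_zero.mp hg
    have hge : star g ⬝ᵥ e = 0 := by rw [star_dotProduct, heg, star_zero]
    simp only [planeRotation, add_mulVec, sub_mulVec, smul_mulVec, one_mulVec, vecMulVec_mulVec,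
      op_smul_eq_smul, mulVec_add, mulVec_smul, he, heg, hge]
    match_scalars
    · linear_combination hc
    · field_simp
      ring

lemma conjTranspose_planeRotation_mul_self (he : star e ⬝ᵥ e = 1) (heg : star e ⬝ᵥ g = 0)
    (hc : star c * c + star g ⬝ᵥ g = 1) :
    (planeRotation e g c)ᴴ * planeRotation e g c = 1 := by
  rcases eq_or_ne g 0 with rfl | hg
  · simp only [star_zero, dotProduct_zero, add_zero] at hc
    simp only [planeRotation, star_zero, vecMulVec_zero, zero_vecMulVec, smul_zero, add_zero,
      sub_zero, conjTranspose_add, conjTranspose_smul, conjTranspose_one, conjTranspose_vecMulVec,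
      star_star, Matrix.mul_add, Matrix.add_mul, Matrix.one_mul, Matrix.mul_one, Matrix.mul_smul,
      Matrix.smul_mul, vecMulVec_mul_vecMulVec, he, one_smul, star_sub, star_one]
    match_scalars
    · ring
    · linear_combination hc
  · have hN : star g ⬝ᵥ g ≠ 0 := mt dotProduct_star_self_eq_zero.mp hg
    have hNs : star (star g ⬝ᵥ g) = star g ⬝ᵥ g := (star_dotProduct g g).symm
    have hge : star g ⬝ᵥ e = 0 := by rw [star_dotProduct, heg, star_zero]
    simp only [planeRotation, conjTranspose_add, conjTranspose_sub, conjTranspose_smul,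
      conjTranspose_one, conjTranspose_vecMulVec, star_star, star_div₀, star_sub, star_one, hNs,
      Matrix.mul_add, Matrix.add_mul, Matrix.mul_sub, Matrix.sub_mul, Matrix.one_mul,
      Matrix.mul_one, Matrix.mul_smul, Matrix.smul_mul, vecMulVec_mul_vecMulVec, vecMulVec_smul,
      he, heg, hge, smul_smul, one_smul, zero_smul, smul_zero, vecMulVec_zero]
    match_scalars
    · rfl
    · linear_combination hc
    · field_simp
      ring
    · field_simp
      ring
    · field_simp
      linear_combination hc

lemma conjTranspose_planeRotation_sub_one_mul (he : star e ⬝ᵥ e = 1) (heg : star e ⬝ᵥ g = 0)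
    (hc : star c * c + star g ⬝ᵥ g = 1) :
    (planeRotation e g c - 1)ᴴ * (planeRotation e g c - 1) = (2 - c - star c) • spanProj e g := by
  rcases eq_or_ne g 0 with rfl | hg
  · simp only [star_zero, dotProduct_zero, add_zero] at hc
    simp only [planeRotation, spanProj, star_zero, vecMulVec_zero, zero_vecMulVec, smul_zero,
      add_zero, sub_zero, add_sub_cancel_left, conjTranspose_smul, conjTranspose_vecMulVec,
      star_star, Matrix.mul_smul, Matrix.smul_mul, vecMulVec_mul_vecMulVec, he, smul_smul,
      one_smul, star_sub, star_one]
    match_scalars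
    linear_combination hc
  · have hN : star g ⬝ᵥ g ≠ 0 := mt dotProduct_star_self_eq_zero.mp hg
    have hNs : star (star g ⬝ᵥ g) = star g ⬝ᵥ g := (star_dotProduct g g).symm
    have hge : star g ⬝ᵥ e = 0 := by rw [star_dotProduct, heg, star_zero]
    simp only [planeRotation, spanProj, add_sub_cancel_left, add_sub_assoc, add_assoc,
      conjTranspose_add, conjTranspose_sub, conjTranspose_smul, conjTranspose_vecMulVec, star_star,
      star_div₀, star_sub, star_one, hNs, Matrix.mul_add, Matrix.add_mul, Matrix.mul_sub,
      Matrix.sub_mul, Matrix.mul_smul, Matrix.smul_mul, vecMulVec_mul_vecMulVec, vecMulVec_smul,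
      he, heg, hge, smul_smul, one_smul, zero_smul, smul_zero, vecMulVec_zero, smul_add]
    match_scalars
    · linear_combination hc
    · field_simp
      ring
    · field_simp
      ring
    · field_simp
      linear_combination hc

lemma cfcAbs_planeRotation_sub_one (he : star e ⬝ᵥ e = 1) (heg : star e ⬝ᵥ g = 0)
    (hc : star c * c + star g ⬝ᵥ g = 1) :
    CFC.abs (planeRotation e g c - 1) = (√(2 - 2 * c.re) : ℂ) • spanProj e g := by
  have hre : c.re ≤ 1 :=
    (le_abs_self _).trans ((Complex.abs_re_le_norm c).trans (norm_le_one_of_star_mul_self_add hc))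
  refine cfcAbs_eq_of_mul_self ((posSemidef_spanProj he heg).smul (by positivity)) ?_
  rw [conjTranspose_planeRotation_sub_one_mul he heg hc, smul_mul_smul_comm,
    spanProj_mul_self he heg, ← Complex.ofReal_mul, Real.mul_self_sqrt (by linarith)]
  congr 1
  rw [sub_sub, Complex.star_def, Complex.add_conj]
  push_cast
  ring

lemma re_trace_cfcAbs_planeRotation_sub_one_le (he : star e ⬝ᵥ e = 1) (heg : star e ⬝ᵥ g = 0)
    (hc : star c * c + star g ⬝ᵥ g = 1) :
    (CFC.abs (planeRotation e g c - 1)).trace.re ≤ 4 := by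
  have hre : -1 ≤ c.re :=
    neg_le_of_abs_le ((Complex.abs_re_le_norm c).trans (norm_le_one_of_star_mul_self_add hc))
  have ht : √(2 - 2 * c.re) ≤ 2 := Real.sqrt_le_iff.mpr ⟨by norm_num, by linarith⟩
  rw [cfcAbs_planeRotation_sub_one he heg hc, trace_smul, smul_eq_mul, Complex.re_ofReal_mul]
  nlinarith [re_trace_spanProj_le (g := g) he, Real.sqrt_nonneg (2 - 2 * c.re)]

lemma exists_unitary_mulVec_eq_and_re_trace_cfcAbs_sub_one_le {x : ι → ℂ}
    (hx : star x ⬝ᵥ x = 1) (he : star e ⬝ᵥ e = 1) :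
    ∃ r ∈ unitaryGroup ι ℂ, r *ᵥ x = e ∧ (CFC.abs (r - 1)).trace.re ≤ 4 := by
  set c := star e ⬝ᵥ x
  set g := x - c • e
  have hx' : c • e + g = x := add_sub_cancel _ _
  have heg : star e ⬝ᵥ g = 0 := by simp [g, dotProduct_sub, he, c]
  have hge : star g ⬝ᵥ e = 0 := by rw [star_dotProduct, heg, star_zero]
  have hc : star c * c + star g ⬝ᵥ g = 1 := by
    rw [← hx, ← hx']
    simp only [star_add, star_smul, add_dotProduct, dotProduct_add, smul_dotProduct,
      dotProduct_smul, he, heg, hge, smul_eq_mul]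
    ring
  refine ⟨planeRotation e g c, ?_, ?_, re_trace_cfcAbs_planeRotation_sub_one_le he heg hc⟩
  · rw [mem_unitaryGroup_iff', star_eq_conjTranspose]
    exact conjTranspose_planeRotation_mul_self he heg hc
  · rw [← hx', planeRotation_mulVec he heg hc]

end PlaneRotation

theorem exists_unitary_close (k n : ℕ) (hk : 1 ≤ k) (hkn : k ≤ n)
    (u : Matrix.unitaryGroup (Fin k) ℂ) :
    ∃ v : Matrix.unitaryGroup (Fin (k - 1)) ℂ,
      trNorm (pad (le_trans (Nat.sub_le k 1) hkn) (v : Matrix (Fin (k-1)) (Fin (k-1)) ℂ)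
          - pad hkn (u : Matrix (Fin k) (Fin k) ℂ)) ≤ 4 / n := by
  obtain ⟨m, rfl⟩ : ∃ m, k = m + 1 := ⟨k - 1, by omega⟩
  obtain ⟨u, hu⟩ := u
  set e : Fin (m + 1) → ℂ := Pi.single (Fin.last m) 1
  have he : star e ⬝ᵥ e = 1 := by simp [e]
  have hue : star (u *ᵥ e) ⬝ᵥ (u *ᵥ e) = 1 := by
    rw [star_mulVec, ← dotProduct_mulVec, mulVec_mulVec, ← star_eq_conjTranspose,
      mem_unitaryGroup_iff'.mp hu, one_mulVec, he]
  obtain ⟨r, hr, hre, htr⟩ := exists_unitary_mulVec_eq_and_re_trace_cfcAbs_sub_one_le hue he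
  obtain ⟨v, hv, hvw⟩ := exists_pad_eq_of_mulVec_single (mul_mem hr hu)
    (by rw [← mulVec_mulVec, hre])
  refine ⟨⟨v, hv⟩, ?_⟩
  calc trNorm (pad _ v - pad hkn u) = trNorm (pad hkn (r * u) - pad hkn u) := by
        rw [← hvw, pad_pad]
    _ = (CFC.abs (r - 1)).trace.re / n := by
        rw [trNorm_pad_sub, ← sub_one_mul, trace_cfcAbs_mul_unitary _ hu]
    _ ≤ 4 / n := by gcongr
end

section
/- Let u be an n×n unitary matrix and suppose there is a unitary w acting on a 2-dimensional subspace X ⊆ ℂⁿ such that v := (1_{X^⊥} ⊕ w)·u* fixes a given unit vector. Then ‖1 - v·u‖₁ ≤ 4/n, where ‖·‖₁ is the normalized trace norm. -/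
open Matrix
open scoped ComplexOrder

/-! Since `v u = p`, the matrix `1 - p` vanishes on `Xᗮ`, so it has rank at most `2`, and its
operator norm is at most `2` because `p` is unitary. The trace norm of a matrix is the sum of its
singular values, of which at most `rank` are nonzero and each is bounded by the operator norm;
hence `‖1 - p‖₁ ≤ 2 · 2 / n`. -/

open scoped Matrix.Norms.L2Operator

lemma CStarRing.norm_one_sub_unitary_le {E : Type*} [NormedRing E] [StarRing E] [CStarRing E]
    (U : unitary E) : ‖1 - (U : E)‖ ≤ 2 := by
  nontriviality E
  calc ‖1 - (U : E)‖ ≤ ‖(1 : E)‖ + ‖(U : E)‖ := norm_sub_le _ _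
    _ = 2 := by rw [CStarRing.norm_one, CStarRing.norm_coe_unitary]; norm_num

namespace Matrix

lemma rank_le_finrank_of_orthogonal_le_ker {𝕜 ι : Type*} [RCLike 𝕜] [Fintype ι] [DecidableEq ι]
    (A : Matrix ι ι 𝕜) (K : Submodule 𝕜 (EuclideanSpace 𝕜 ι))
    (hA : ∀ ζ ∈ Kᗮ, toEuclideanCLM (𝕜 := 𝕜) A ζ = 0) :
    A.rank ≤ Module.finrank 𝕜 K := by
  have hrank : A.rank = Module.finrank 𝕜 (LinearMap.range (toEuclideanLin A)) := by
    rw [rank_eq_finrank_range_toLin A (EuclideanSpace.basisFun ι 𝕜).toBasis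
      (EuclideanSpace.basisFun ι 𝕜).toBasis, toEuclideanLin_eq_toLin_orthonormal]
  have hker : Module.finrank 𝕜 Kᗮ ≤ Module.finrank 𝕜 (LinearMap.ker (toEuclideanLin A)) :=
    Submodule.finrank_mono fun ζ hζ ↦ hA ζ hζ
  have := LinearMap.finrank_range_add_finrank_ker (toEuclideanLin A)
  have := K.finrank_add_finrank_orthogonal
  omega

variable {n : ℕ}

lemma re_trace_mAbs (x : Matrix (Fin n) (Fin n) ℂ) :
    (mAbs x).trace.re = ∑ i, √((posSemidef_conjTranspose_mul_self x).1.eigenvalues i) := by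
  rw [mAbs, trace_mul_cycle, UnitaryGroup.star_mul_self, one_mul, trace_diagonal, Complex.re_sum]
  rfl

lemma eigenvalues_conjTranspose_mul_self_le (x : Matrix (Fin n) (Fin n) ℂ) (i : Fin n) :
    (posSemidef_conjTranspose_mul_self x).1.eigenvalues i ≤ ‖x‖ ^ 2 := by
  have : Nonempty (Fin n) := ⟨i⟩
  have hmem := (spectrum.algebraMap_mem_iff ℂ).2
    ((posSemidef_conjTranspose_mul_self x).1.eigenvalues_mem_spectrum_real i)
  have hle := spectrum.norm_le_norm_of_mem hmem
  rw [l2_opNorm_conjTranspose_mul_self, Complex.coe_algebraMap, Complex.norm_real,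
    Real.norm_eq_abs] at hle
  nlinarith [le_abs_self ((posSemidef_conjTranspose_mul_self x).1.eigenvalues i)]

open Finset in
lemma re_trace_mAbs_le_rank_mul_norm (x : Matrix (Fin n) (Fin n) ℂ) :
    (mAbs x).trace.re ≤ x.rank * ‖x‖ := by
  set hx := (posSemidef_conjTranspose_mul_self x).1
  have hcard : #{i | hx.eigenvalues i ≠ 0} = x.rank := by
    rw [← rank_conjTranspose_mul_self x, hx.rank_eq_card_non_zero_eigs, Fintype.card_subtype]
  have hsqrt : ∀ i, √(hx.eigenvalues i) ≤ ‖x‖ := fun i ↦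
    Real.sqrt_le_iff.2 ⟨norm_nonneg x, eigenvalues_conjTranspose_mul_self_le x i⟩
  calc (mAbs x).trace.re = ∑ i with hx.eigenvalues i ≠ 0, √(hx.eigenvalues i) := by
        rw [re_trace_mAbs, Finset.sum_filter_of_ne]
        intro i _ hi h0
        exact hi (by rw [h0, Real.sqrt_zero])
    _ ≤ #{i | hx.eigenvalues i ≠ 0} • ‖x‖ := Finset.sum_le_card_nsmul _ _ _ fun i _ ↦ hsqrt i
    _ = x.rank * ‖x‖ := by rw [hcard, nsmul_eq_mul]

lemma trNorm_le_rank_mul_norm_div (x : Matrix (Fin n) (Fin n) ℂ) :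
    trNorm x ≤ x.rank * ‖x‖ / n := by
  rw [trNorm, one_div_mul_eq_div]
  gcongr
  exact re_trace_mAbs_le_rank_mul_norm x

end Matrix

theorem trNorm_one_sub_vu_le_general (n : ℕ)
    (u : Matrix.unitaryGroup (Fin n) ℂ)
    (X : Submodule ℂ (EuclideanSpace ℂ (Fin n))) (hX : Module.finrank ℂ X = 2)
    (p : Matrix.unitaryGroup (Fin n) ℂ)
    (hp_perp : ∀ ζ ∈ Xᗮ, Matrix.toEuclideanCLM (𝕜 := ℂ) (p : Matrix (Fin n) (Fin n) ℂ) ζ = ζ)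
    (v : Matrix (Fin n) (Fin n) ℂ)
    (hv : v = (p : Matrix (Fin n) (Fin n) ℂ) * (u : Matrix (Fin n) (Fin n) ℂ)ᴴ) :
    trNorm (1 - v * (u : Matrix (Fin n) (Fin n) ℂ)) ≤ 4 / n := by
  have hvu : v * (u : Matrix (Fin n) (Fin n) ℂ) = p := by
    rw [hv, mul_assoc, ← star_eq_conjTranspose, UnitaryGroup.star_mul_self, mul_one]
  have hrank : (1 - (p : Matrix (Fin n) (Fin n) ℂ)).rank ≤ 2 := by
    refine hX ▸ rank_le_finrank_of_orthogonal_le_ker _ X fun ζ hζ ↦ ?_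
    simp [hp_perp ζ hζ]
  rw [hvu]
  calc trNorm (1 - (p : Matrix (Fin n) (Fin n) ℂ))
      ≤ (1 - (p : Matrix (Fin n) (Fin n) ℂ)).rank * ‖1 - (p : Matrix (Fin n) (Fin n) ℂ)‖ / n :=
        trNorm_le_rank_mul_norm_div _
    _ ≤ 2 * 2 / n := by
        gcongr
        · exact_mod_cast hrank
        · exact CStarRing.norm_one_sub_unitary_le p
    _ = 4 / n := by norm_num

/-- if `v = (1_{X^⊥} ⊕ w)·u*` (with `w` a unitary of the 2-dimensional
subspace `X`) fixes some unit vector, then `‖1 - v·u‖₁ ≤ 4/n`. -/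
theorem trNorm_one_sub_vu_le (n : ℕ)
    (u : Matrix.unitaryGroup (Fin n) ℂ)
    (X : Submodule ℂ (EuclideanSpace ℂ (Fin n))) (hX : Module.finrank ℂ X = 2)
    (p : Matrix.unitaryGroup (Fin n) ℂ)
    (hp_perp : ∀ ζ ∈ Xᗮ, Matrix.toEuclideanCLM (𝕜 := ℂ) (p : Matrix (Fin n) (Fin n) ℂ) ζ = ζ)
    (hp_X : ∀ ζ ∈ X, Matrix.toEuclideanCLM (𝕜 := ℂ) (p : Matrix (Fin n) (Fin n) ℂ) ζ ∈ X)
    (v : Matrix (Fin n) (Fin n) ℂ)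
    (hv : v = (p : Matrix (Fin n) (Fin n) ℂ) * (u : Matrix (Fin n) (Fin n) ℂ)ᴴ)
    (e : EuclideanSpace ℂ (Fin n)) (he : ‖e‖ = 1)
    (hfix : Matrix.toEuclideanCLM (𝕜 := ℂ) v e = e) :
    trNorm (1 - v * (u : Matrix (Fin n) (Fin n) ℂ)) ≤ 4 / n :=
  trNorm_one_sub_vu_le_general n u X hX p hp_perp v hv
end

section
/- Let 1 ≤ k ≤ n and let u ∈ O(k) be a k×k real orthogonal matrix. Then there exists a (k-1)×(k-1) orthogonal matrix v ∈ O(k-1) such that the normalized trace distance in M_n(ℝ) between v ⊕ 1_{n-k+1} and u ⊕ 1_{n-k} is at most 4/n. -/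
open Matrix

/-- The absolute value `|x| = (xᵀx)^{1/2}` of a real matrix. -/
noncomputable def mAbsR {n : ℕ} (x : Matrix (Fin n) (Fin n) ℝ) : Matrix (Fin n) (Fin n) ℝ :=
  ((Matrix.posSemidef_conjTranspose_mul_self x).1.eigenvectorUnitary : Matrix (Fin n) (Fin n) ℝ) *
    diagonal ((↑) ∘ (√·) ∘ (Matrix.posSemidef_conjTranspose_mul_self x).1.eigenvalues) *
    (star (Matrix.posSemidef_conjTranspose_mul_self x).1.eigenvectorUnitary : Matrix (Fin n) (Fin n) ℝ)

/-- The normalized trace norm on real matrices. -/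
noncomputable def trNormR {n : ℕ} (x : Matrix (Fin n) (Fin n) ℝ) : ℝ :=
  (1 / (n : ℝ)) * (mAbsR x).trace

/-- Block-diagonal padding `u ⊕ 1_{n-k}` for real matrices. -/
def padR {k n : ℕ} (_h : k ≤ n) (u : Matrix (Fin k) (Fin k) ℝ) : Matrix (Fin n) (Fin n) ℝ :=
  fun i j =>
    if hi : (i : ℕ) < k then (if hj : (j : ℕ) < k then u ⟨i, hi⟩ ⟨j, hj⟩ else 0)
    else (if (i : ℕ) = (j : ℕ) then 1 else 0)

/-! Let `e` be the last basis vector of `ℝᵏ` and `x = u e`. The Householder reflection `H` in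
`(x - e)ᗮ` maps `x` to `e`, so the orthogonal matrix `H u` fixes `e` and hence equals `v ⊕ 1`
with `v ∈ O(k - 1)`. The difference `H u - u = (H - 1) u` has rank one, and the trace norm of
`a bᵀ` is `‖a‖ ‖b‖`, which here is at most `2`. -/

open scoped MatrixOrder in
lemma mAbsR_eq_cfc_sqrt {n : ℕ} (x : Matrix (Fin n) (Fin n) ℝ) :
    mAbsR x = CFC.sqrt (xᴴ * x) := by
  have hx := Matrix.posSemidef_conjTranspose_mul_self x
  rw [CFC.sqrt_eq_real_sqrt _ hx.nonneg, cfcₙ_eq_cfc, hx.1.cfc_eq, Matrix.IsHermitian.cfc,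
    Unitary.conjStarAlgAut_apply]
  rfl

open scoped MatrixOrder in
lemma mAbsR_eq_of_mul_self {n : ℕ} {x b : Matrix (Fin n) (Fin n) ℝ} (hb : b.PosSemidef)
    (hbb : b * b = xᴴ * x) : mAbsR x = b := by
  rw [mAbsR_eq_cfc_sqrt]
  exact CFC.sqrt_unique hbb hb.nonneg

lemma trace_mAbsR_vecMulVec {n : ℕ} (a b : Fin n → ℝ) :
    (mAbsR (vecMulVec a b)).trace = √(a ⬝ᵥ a) * √(b ⬝ᵥ b) := by
  rcases eq_or_ne b 0 with rfl | hb
  · simp [mAbsR_eq_of_mul_self (x := 0) Matrix.PosSemidef.zero (by simp)]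
  have ha : 0 ≤ a ⬝ᵥ a := by simpa using dotProduct_star_self_nonneg a
  have hbb : 0 < b ⬝ᵥ b := lt_of_le_of_ne (by simpa using dotProduct_star_self_nonneg b)
    (by simpa [eq_comm])
  set c := √(a ⬝ᵥ a) / √(b ⬝ᵥ b)
  have habs : mAbsR (vecMulVec a b) = c • vecMulVec b b := by
    refine mAbsR_eq_of_mul_self ((Matrix.posSemidef_vecMulVec_self_star b).smul (by positivity)) ?_
    rw [conjTranspose_vecMulVec, smul_mul_smul, vecMulVec_mul_vecMulVec, vecMulVec_mul_vecMulVec,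
      ← vecMulVec_smul, star_trivial, star_trivial, smul_smul]
    congr 2
    rw [div_mul_div_comm, Real.mul_self_sqrt ha, Real.mul_self_sqrt hbb.le,
      div_mul_cancel₀ _ hbb.ne']
  rw [habs, trace_smul, trace_vecMulVec, smul_eq_mul, div_mul_eq_mul_div,
    div_eq_iff (Real.sqrt_pos.2 hbb).ne', mul_assoc, Real.mul_self_sqrt hbb.le]

section Householder

variable {𝕜 ι : Type*} [Field 𝕜] [Fintype ι] [DecidableEq ι]

/-- The reflection in `dᗮ`; since `2 / 0 = 0`, it is the identity when `d ⬝ᵥ d = 0`. -/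
def householder (d : ι → 𝕜) : Matrix ι ι 𝕜 :=
  1 - (2 / (d ⬝ᵥ d)) • vecMulVec d d

lemma householder_transpose (d : ι → 𝕜) : (householder d)ᵀ = householder d := by
  simp [householder, transpose_vecMulVec]

lemma householder_mul_self (d : ι → 𝕜) : householder d * householder d = 1 := by
  rcases eq_or_ne (d ⬝ᵥ d) 0 with hd | hd
  · simp [householder, hd]
  have h2 : 2 / d ⬝ᵥ d * (2 / d ⬝ᵥ d) * d ⬝ᵥ d = 2 * (2 / d ⬝ᵥ d) := by field_simp
  rw [householder, sub_mul, mul_sub, mul_sub, smul_mul_smul, vecMulVec_mul_vecMulVec, one_mul,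
    mul_one, one_mul, vecMulVec_smul, smul_smul, h2]
  module

lemma householder_mul_sub (d : ι → 𝕜) (u : Matrix ι ι 𝕜) :
    householder d * u - u = vecMulVec (-(2 / (d ⬝ᵥ d)) • d) (d ᵥ* u) := by
  rw [householder, sub_mul, one_mul, sub_sub_cancel_left, smul_mul, vecMulVec_mul,
    ← smul_vecMulVec, neg_smul, neg_vecMulVec]

lemma householder_sub_mulVec [LinearOrder 𝕜] [IsStrictOrderedRing 𝕜] {x y : ι → 𝕜}
    (h : x ⬝ᵥ x = y ⬝ᵥ y) : householder (x - y) *ᵥ x = y := by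
  rcases eq_or_ne x y with rfl | hxy
  · simp [householder]
  have hd : (x - y) ⬝ᵥ (x - y) = 2 * ((x - y) ⬝ᵥ x) := by
    simp only [sub_dotProduct, dotProduct_sub, dotProduct_comm y x, h]
    ring
  have hd0 : (x - y) ⬝ᵥ (x - y) ≠ 0 := by rwa [Ne, dotProduct_self_eq_zero, sub_eq_zero]
  have hcoef : 2 / ((x - y) ⬝ᵥ (x - y)) * ((x - y) ⬝ᵥ x) = 1 := by
    rw [div_mul_eq_mul_div, ← hd, div_self hd0]
  rw [householder, sub_mulVec, one_mulVec, smul_mulVec, vecMulVec_mulVec, op_smul_eq_smul,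
    smul_smul, hcoef, one_smul, sub_sub_cancel]

lemma householder_mem_orthogonalGroup (d : ι → 𝕜) :
    householder d ∈ orthogonalGroup ι 𝕜 := by
  rw [mem_orthogonalGroup_iff', householder_transpose, householder_mul_self]

end Householder

section OrthogonalGroup

variable {R ι : Type*} [CommRing R] [Fintype ι] [DecidableEq ι] {u : Matrix ι ι R}

lemma mulVec_dotProduct_mulVec_self (hu : u ∈ orthogonalGroup ι R) (x : ι → R) :
    u *ᵥ x ⬝ᵥ u *ᵥ x = x ⬝ᵥ x := by
  rw [dotProduct_mulVec, ← vecMul_transpose, vecMul_vecMul, (mem_orthogonalGroup_iff' ι R).1 hu,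
    vecMul_one]

lemma vecMul_dotProduct_vecMul_self (hu : u ∈ orthogonalGroup ι R) (x : ι → R) :
    x ᵥ* u ⬝ᵥ x ᵥ* u = x ⬝ᵥ x := by
  rw [← dotProduct_mulVec, ← vecMul_transpose, vecMul_vecMul,
    (mem_orthogonalGroup_iff ι R).1 hu, vecMul_one]

end OrthogonalGroup

lemma dotProduct_extend_zero {R α β : Type*} [NonUnitalNonAssocSemiring R] [Fintype α]
    [Fintype β] {f : α → β} (hf : Function.Injective f) (x y : α → R) :
    Function.extend f x 0 ⬝ᵥ Function.extend f y 0 = x ⬝ᵥ y := by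
  refine (Fintype.sum_of_injective f hf _ _ (fun b hb => ?_) fun a => ?_).symm
  · simp [Function.extend_apply' _ _ _ (by simpa using hb)]
  · simp [hf.extend_apply]

lemma extend_castLE_apply {R : Type*} [Zero R] {k n : ℕ} (h : k ≤ n) (x : Fin k → R)
    (i : Fin n) :
    Function.extend (Fin.castLE h) x 0 i = if hi : (i : ℕ) < k then x ⟨i, hi⟩ else 0 := by
  split_ifs with hi
  · exact (Fin.castLE_injective h).extend_apply x 0 ⟨i, hi⟩
  · refine Function.extend_apply' _ _ _ ?_
    rintro ⟨j, rfl⟩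
    exact hi j.isLt

lemma padR_sub_padR_eq_vecMulVec {k n : ℕ} (h : k ≤ n) {a b : Matrix (Fin k) (Fin k) ℝ}
    {x y : Fin k → ℝ} (hab : a - b = vecMulVec x y) :
    padR h a - padR h b =
      vecMulVec (Function.extend (Fin.castLE h) x 0) (Function.extend (Fin.castLE h) y 0) := by
  ext i j
  simp only [padR, Matrix.sub_apply, vecMulVec_apply, extend_castLE_apply]
  split_ifs <;> first | rw [← Matrix.sub_apply, hab, vecMulVec_apply] | simp

lemma padR_padR {k l n : ℕ} (hkl : k ≤ l) (hln : l ≤ n) (v : Matrix (Fin k) (Fin k) ℝ) :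
    padR hln (padR hkl v) = padR (hkl.trans hln) v := by
  ext i j
  simp only [padR]
  split_ifs <;> first | rfl | omega

lemma exists_padR_eq_of_mulVec_single_last {m : ℕ} {w : Matrix (Fin (m + 1)) (Fin (m + 1)) ℝ}
    (hw : w ∈ orthogonalGroup (Fin (m + 1)) ℝ)
    (hwe : w *ᵥ Pi.single (Fin.last m) 1 = Pi.single (Fin.last m) 1) :
    ∃ v : orthogonalGroup (Fin m) ℝ, padR m.le_succ (v : Matrix (Fin m) (Fin m) ℝ) = w := by
  have hwTw := (mem_orthogonalGroup_iff' _ _).1 hw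
  have hwTe : wᵀ *ᵥ Pi.single (Fin.last m) 1 = Pi.single (Fin.last m) 1 := by
    conv_lhs => rw [← hwe]
    rw [mulVec_mulVec, hwTw, one_mulVec]
  have hcol (i : Fin (m + 1)) :
      w i (Fin.last m) = (Pi.single (Fin.last m) 1 : Fin (m + 1) → ℝ) i := by
    simpa using congr_fun hwe i
  have hrow (j : Fin (m + 1)) :
      w (Fin.last m) j = (Pi.single (Fin.last m) 1 : Fin (m + 1) → ℝ) j := by
    simpa using congr_fun hwTe j
  have hv : w.submatrix Fin.castSucc Fin.castSucc ∈ orthogonalGroup (Fin m) ℝ := by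
    rw [mem_orthogonalGroup_iff']
    ext i j
    simpa [Matrix.mul_apply, Fin.sum_univ_castSucc, hrow, Matrix.one_apply] using
      congr_fun₂ hwTw i.castSucc j.castSucc
  refine ⟨⟨_, hv⟩, ?_⟩
  ext i j
  induction i using Fin.lastCases <;> induction j using Fin.lastCases <;>
    simp [padR, hcol, hrow, (Fin.is_lt _).ne']

lemma trNormR_padR_householder_mul_sub_le {k n : ℕ} (h : k ≤ n) (d : Fin k → ℝ)
    {u : Matrix (Fin k) (Fin k) ℝ} (hu : u ∈ orthogonalGroup (Fin k) ℝ) :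
    trNormR (padR h (householder d * u) - padR h u) ≤ 2 / n := by
  have hd : 0 ≤ d ⬝ᵥ d := by simpa using dotProduct_star_self_nonneg d
  rw [trNormR, padR_sub_padR_eq_vecMulVec h (householder_mul_sub d u), trace_mAbsR_vecMulVec,
    dotProduct_extend_zero (Fin.castLE_injective h),
    dotProduct_extend_zero (Fin.castLE_injective h),
    vecMul_dotProduct_vecMul_self hu, smul_dotProduct, dotProduct_smul, smul_eq_mul, smul_eq_mul,
    ← Real.sqrt_mul' _ hd]
  set c := -(2 / d ⬝ᵥ d)
  have hcd : |c * d ⬝ᵥ d| ≤ 2 := by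
    rcases hd.eq_or_lt with h0 | hpos
    · simp [← h0]
    · rw [neg_mul, abs_neg, div_mul_cancel₀ _ hpos.ne', abs_two]
  rw [show c * (c * d ⬝ᵥ d) * d ⬝ᵥ d = (c * d ⬝ᵥ d) ^ 2 by ring, Real.sqrt_sq_eq_abs,
    one_div_mul_eq_div]
  gcongr

/-- the orthogonal-group version of Proposition 2. -/
theorem exists_orthogonal_close (k n : ℕ) (hk : 1 ≤ k) (hkn : k ≤ n)
    (u : Matrix.orthogonalGroup (Fin k) ℝ) :
    ∃ v : Matrix.orthogonalGroup (Fin (k - 1)) ℝ,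
      trNormR (padR (le_trans (Nat.sub_le k 1) hkn) (v : Matrix (Fin (k-1)) (Fin (k-1)) ℝ)
          - padR hkn (u : Matrix (Fin k) (Fin k) ℝ)) ≤ 4 / n := by
  obtain ⟨m, rfl⟩ : ∃ m, k = m + 1 := ⟨k - 1, by omega⟩
  obtain ⟨U, hU⟩ := u
  set e : Fin (m + 1) → ℝ := Pi.single (Fin.last m) 1
  set H := householder (U *ᵥ e - e)
  have hHU : H * U ∈ orthogonalGroup (Fin (m + 1)) ℝ :=
    mul_mem (householder_mem_orthogonalGroup _) hU
  have hHUe : (H * U) *ᵥ e = e := by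
    rw [← mulVec_mulVec, householder_sub_mulVec (mulVec_dotProduct_mulVec_self hU e)]
  obtain ⟨v, hv⟩ := exists_padR_eq_of_mulVec_single_last hHU hHUe
  refine ⟨v, ?_⟩
  calc trNormR (padR _ (v : Matrix (Fin m) (Fin m) ℝ) - padR hkn U)
      = trNormR (padR hkn (H * U) - padR hkn U) := by rw [← hv, padR_padR]
    _ ≤ 2 / n := trNormR_padR_householder_mul_sub_le hkn _ hU
    _ ≤ 4 / n := by gcongr; norm_num
end
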